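/- arXiv:1708.01690 — 5 statements merged into one kernel-verified Lean document; each statement's English description precedes it below -/
import Mathlib

section
/- Let X be an n×n real symmetric positive semidefinite matrix with all diagonal entries equal to 1, let ε > 0, q ∈ [0,1], and let α be a positive real number with α ≤ ε/(4(1+ε^q)). Define Y = X − 4αε(1+ε^q)·(X² + εI)^{−2}·X, and let Y′ be the matrix obtained from Y by replacing every diagonal entry of Y with 1 (keeping all off-diagonal entries of Y). Then Y′ is symmetric positive semidefinite. -/
/-!
With `M = X² + εI` and `c = 4αε(1 + ε^q) ≤ ε²`, `M` commutes with `X`, so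
`Y = X - c M⁻² X = M⁻¹ ((M² - c) X) M⁻¹`, and `(M² - c) X = X⁵ + 2εX³ + (ε² - c) X` is positive
semidefinite. Since `c M⁻² X = c M⁻¹ X M⁻¹` is positive semidefinite too, the diagonal of `Y` is
bounded by that of `X`, i.e. by `1`; raising the diagonal of `Y` to `1` adds a nonnegative
diagonal matrix.
-/

namespace Matrix

variable {n : Type*} [DecidableEq n]

theorem PosSemidef.update_diag_of_le {R : Type*} [CommRing R] [PartialOrder R] [StarRing R]
    [StarOrderedRing R] {Y : Matrix n n R} (hY : Y.PosSemidef) {d : n → R}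
    (hd : ∀ i, Y i i ≤ d i) : (of fun i j => if i = j then d i else Y i j).PosSemidef := by
  have : (of fun i j => if i = j then d i else Y i j) = Y + diagonal fun i => d i - Y i i := by
    ext i j
    by_cases hij : i = j
    · subst hij; simp
    · simp [hij]
  exact this ▸ hY.add (posSemidef_diagonal_iff.mpr fun i => sub_nonneg.mpr (hd i))

variable [Fintype n]

theorem commute_nonsing_inv_right {R : Type*} [CommRing R] {A B : Matrix n n R}
    (h : Commute A B) : Commute A B⁻¹ := by
  by_cases hB : IsUnit B.det
  · have hu := (B.isUnit_iff_isUnit_det.mpr hB).unit_spec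
    simpa only [coe_units_inv, hu] using
      h.units_inv_right (u := (B.isUnit_iff_isUnit_det.mpr hB).unit)
  · rw [nonsing_inv_apply_not_isUnit _ hB]
    exact Commute.zero_right A

theorem sub_smul_inv_sq_mul_eq {R : Type*} [CommRing R] {X M : Matrix n n R}
    (hM : IsUnit M) (h : Commute X M) (c : R) :
    X - c • (M⁻¹ ^ 2 * X) = M⁻¹ * ((M ^ 2 - c • 1) * X) * M⁻¹ := by
  have hMN : M * M⁻¹ = 1 := mul_nonsing_inv M ((isUnit_iff_isUnit_det M).mp hM)
  have hNM : M⁻¹ * M = 1 := nonsing_inv_mul M ((isUnit_iff_isUnit_det M).mp hM)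
  calc X - c • (M⁻¹ ^ 2 * X) = X * (M * M⁻¹) - c • (M⁻¹ * (X * M⁻¹)) := by
        rw [hMN, mul_one, (commute_nonsing_inv_right h).eq, sq, mul_assoc]
    _ = (M⁻¹ * M) * (M * X) * M⁻¹ - c • (M⁻¹ * (X * M⁻¹)) := by
        rw [hNM, one_mul, ← h.eq, mul_assoc]
    _ = _ := by
        simp only [sq, sub_mul, mul_sub, smul_mul_assoc, mul_smul_comm, one_mul, mul_assoc]

theorem PosSemidef.inv_sq_mul_of_commute {R : Type*} [CommRing R] [PartialOrder R] [StarRing R]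
    {X M : Matrix n n R} (hX : X.PosSemidef) (hM : M.IsHermitian) (h : Commute X M) :
    (M⁻¹ ^ 2 * X).PosSemidef := by
  have : (M⁻¹)ᴴ * X * M⁻¹ = M⁻¹ ^ 2 * X := by
    rw [hM.inv.eq, mul_assoc, (commute_nonsing_inv_right h).eq, ← mul_assoc, sq]
  exact this ▸ hX.conjTranspose_mul_mul_same M⁻¹

section Real

variable {X : Matrix n n ℝ} {ε : ℝ}

theorem PosSemidef.posDef_sq_add_smul_one (hX : X.PosSemidef) (hε : 0 < ε) :
    (X ^ 2 + ε • (1 : Matrix n n ℝ)).PosDef :=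
  PosDef.posSemidef_add (hX.pow 2) (PosDef.one.smul hε)

theorem commute_sq_add_smul_one (X : Matrix n n ℝ) (ε : ℝ) :
    Commute X (X ^ 2 + ε • (1 : Matrix n n ℝ)) :=
  ((Commute.refl X).pow_right 2).add_right ((Commute.one_right X).smul_right ε)

theorem PosSemidef.sub_smul_inv_sq_mul (hX : X.PosSemidef) (hε : 0 < ε) {c : ℝ}
    (hc : c ≤ ε ^ 2) :
    (X - c • ((X ^ 2 + ε • (1 : Matrix n n ℝ))⁻¹ ^ 2 * X)).PosSemidef := by
  set M := X ^ 2 + ε • (1 : Matrix n n ℝ)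
  have hMpd : M.PosDef := hX.posDef_sq_add_smul_one hε
  have hpoly : (M ^ 2 - c • 1) * X = X ^ 5 + (2 * ε) • X ^ 3 + (ε ^ 2 - c) • X := by
    rw [sq M]
    simp only [M, add_mul, mul_add, sub_mul, smul_mul_assoc, mul_smul_comm, one_mul, mul_one,
      ← pow_add, ← pow_succ]
    module
  have hP : ((M ^ 2 - c • 1) * X).PosSemidef := hpoly ▸
    ((hX.pow 5).add ((hX.pow 3).smul (by positivity))).add (hX.smul (sub_nonneg.mpr hc))
  rw [sub_smul_inv_sq_mul_eq hMpd.isUnit (commute_sq_add_smul_one X ε)]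
  simpa only [hMpd.isHermitian.inv.eq] using hP.conjTranspose_mul_mul_same M⁻¹

end Real

end Matrix

theorem singular_value_relaxation_step_unit_diagonal_psd_general
    (n : ℕ) (X : Matrix (Fin n) (Fin n) ℝ) (hX : X.PosSemidef)
    (hdiag : ∀ i, X i i = 1)
    (ε q α : ℝ) (hε : 0 < ε)
    (hα : 0 < α) (hαle : α ≤ ε / (4 * (1 + ε ^ q)))
    (Y : Matrix (Fin n) (Fin n) ℝ)
    (hY : Y = X - (4 * α * ε * (1 + ε ^ q)) •
      (((X ^ 2 + ε • (1 : Matrix (Fin n) (Fin n) ℝ))⁻¹) ^ 2 * X))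
    (Y' : Matrix (Fin n) (Fin n) ℝ)
    (hY' : Y' = Matrix.of fun i j => if i = j then (1 : ℝ) else Y i j) :
    Y'.PosSemidef := by
  set c := 4 * α * ε * (1 + ε ^ q)
  have hc : c ≤ ε ^ 2 := by
    rw [le_div_iff₀ (by positivity)] at hαle
    nlinarith
  have hYdiag (i : Fin n) : Y i i ≤ 1 := by
    have hMX := hX.inv_sq_mul_of_commute (hX.posDef_sq_add_smul_one hε).isHermitian
      (Matrix.commute_sq_add_smul_one X ε)
    have hdrop := (hMX.smul (by positivity : 0 ≤ c)).diag_nonneg (i := i)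
    rw [hY, Matrix.sub_apply, hdiag]
    linarith
  rw [hY']
  exact (hY ▸ hX.sub_smul_inv_sq_mul hε hc).update_diag_of_le hYdiag

/-- Let `X` be an `n × n` real symmetric positive semidefinite matrix with
unit diagonal, `ε > 0`, `q ∈ [0,1]`, and `0 < α ≤ ε / (4(1 + ε^q))`.  Let
`Y = X - 4αε(1+ε^q) • (X² + εI)⁻² * X` and let `Y'` be obtained from `Y` by replacing every
diagonal entry with `1`.  Then `Y'` is positive semidefinite. -/
theorem singular_value_relaxation_step_unit_diagonal_psd
    (n : ℕ) (X : Matrix (Fin n) (Fin n) ℝ) (hX : X.PosSemidef)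
    (hdiag : ∀ i, X i i = 1)
    (ε q α : ℝ) (hε : 0 < ε) (hq0 : 0 ≤ q) (hq1 : q ≤ 1)
    (hα : 0 < α) (hαle : α ≤ ε / (4 * (1 + ε ^ q)))
    (Y : Matrix (Fin n) (Fin n) ℝ)
    (hY : Y = X - (4 * α * ε * (1 + ε ^ q)) •
      (((X ^ 2 + ε • (1 : Matrix (Fin n) (Fin n) ℝ))⁻¹) ^ 2 * X))
    (Y' : Matrix (Fin n) (Fin n) ℝ)
    (hY' : Y' = Matrix.of fun i j => if i = j then (1 : ℝ) else Y i j) :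
    Y'.PosSemidef :=
  singular_value_relaxation_step_unit_diagonal_psd_general n X hX hdiag ε q α hε hα hαle Y hY Y' hY'
end

section
/- Let X be an n×n real symmetric positive semidefinite matrix with all diagonal entries equal to 1, let ε > 0, p ∈ (0,1], and let α be a positive real number with α ≤ ε^{(2−p)/2}/(2p). Define Y = X − 2αp·X·(X² + εI)^{(p−2)/2}, and let Y′ be the matrix obtained from Y by replacing every diagonal entry of Y with 1 (keeping all off-diagonal entries of Y). Then Y′ is symmetric positive semidefinite. -/
open Matrix

/-- The real matrix power `A ^ r` of a real symmetric (Hermitian) matrix `A`, defined via the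
spectral decomposition: `A ^ r = U * diagonal (λᵢ ^ r) * Uᵀ`, where `A = U * diagonal λ * Uᵀ`
is the eigendecomposition of `A`. -/
noncomputable def Matrix.IsHermitian.rpow {n : ℕ} {A : Matrix (Fin n) (Fin n) ℝ}
    (hA : A.IsHermitian) (r : ℝ) : Matrix (Fin n) (Fin n) ℝ :=
  (hA.eigenvectorUnitary : Matrix (Fin n) (Fin n) ℝ) *
    Matrix.diagonal (fun i => hA.eigenvalues i ^ r) *
    star (hA.eigenvectorUnitary : Matrix (Fin n) (Fin n) ℝ)

theorem isHermitian_sq_add_smul_one {n : ℕ} {X : Matrix (Fin n) (Fin n) ℝ}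
    (hX : X.IsHermitian) (ε : ℝ) :
    (X ^ 2 + ε • (1 : Matrix (Fin n) (Fin n) ℝ)).IsHermitian :=
  (hX.pow 2).add (by simp [Matrix.IsHermitian, Matrix.conjTranspose_smul])

open scoped MatrixOrder

/-! By the spectral theorem `Y = f(X)` with `f x = x * (1 - 2αp (x² + ε)^((p-2)/2))`. Since the
exponent is negative, `2αp (x² + ε)^((p-2)/2) ≤ 2αp ε^((p-2)/2) ≤ 1` by the bound on the step size,
so `f ≥ 0` on the spectrum of `X` and `Y` is positive semidefinite. Moreover
`Y i i = 1 - 2αp g(X) i i` with `g x = x (x² + ε)^((p-2)/2) ≥ 0` on the spectrum, so `Y i i ≤ 1`,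
and `Y' = Y + diagonal (1 - Y i i)` is a sum of positive semidefinite matrices. -/

theorem Matrix.IsHermitian.rpow_eq_cfc {n : ℕ} {A : Matrix (Fin n) (Fin n) ℝ}
    (hA : A.IsHermitian) (r : ℝ) : hA.rpow r = cfc (fun x : ℝ => x ^ r) A := by
  rw [hA.cfc_eq, IsHermitian.cfc, Unitary.conjStarAlgAut_apply, IsHermitian.rpow]
  rfl

theorem Matrix.IsHermitian.mul_rpow_sq_add_smul_one {n : ℕ} {X : Matrix (Fin n) (Fin n) ℝ}
    (hX : X.IsHermitian) (ε r : ℝ) :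
    X * (isHermitian_sq_add_smul_one hX ε).rpow r = cfc (fun x => x * (x ^ 2 + ε) ^ r) X := by
  have hcont (f : ℝ → ℝ) : ContinuousOn f (spectrum ℝ X) := (Set.toFinite _).continuousOn f
  have hsq : X ^ 2 + ε • 1 = cfc (fun x : ℝ => x ^ 2 + ε) X := by
    rw [cfc_add_const ε (fun x : ℝ => x ^ 2) X, cfc_pow_id X 2, Algebra.algebraMap_eq_smul_one]
  rw [cfc_mul (fun x => x) _ X (hg := hcont _), cfc_id' ℝ X,
    cfc_comp' (fun x => x ^ r) _ X ((Set.toFinite _).continuousOn _), ← hsq,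
    rpow_eq_cfc]

theorem Matrix.IsHermitian.sub_smul_mul_rpow_sq_add_smul_one {n : ℕ}
    {X : Matrix (Fin n) (Fin n) ℝ} (hX : X.IsHermitian) (ε r c : ℝ) :
    X - c • (X * (isHermitian_sq_add_smul_one hX ε).rpow r)
      = cfc (fun x => x - c * (x * (x ^ 2 + ε) ^ r)) X := by
  have hcont (f : ℝ → ℝ) : ContinuousOn f (spectrum ℝ X) := (Set.toFinite _).continuousOn f
  rw [cfc_sub _ _ X (hcont _) (hcont _), cfc_id' ℝ X, cfc_const_mul c _ X (hcont _),
    hX.mul_rpow_sq_add_smul_one]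

theorem Real.mul_rpow_sq_add_le_one {ε r c : ℝ} (hε : 0 < ε) (hr : r ≤ 0)
    (hc : c ≤ ε ^ (-r)) (x : ℝ) : c * (x ^ 2 + ε) ^ r ≤ 1 :=
  calc c * (x ^ 2 + ε) ^ r ≤ ε ^ (-r) * ε ^ r := by
        gcongr ?_ * ?_
        exact Real.rpow_le_rpow_of_nonpos hε (le_add_of_nonneg_left (sq_nonneg x)) hr
    _ = 1 := by rw [← Real.rpow_add hε, neg_add_cancel, Real.rpow_zero]

theorem Matrix.PosSemidef.posSemidef_cfc {ι : Type*} [Fintype ι] [DecidableEq ι]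
    {X : Matrix ι ι ℝ} (hX : X.PosSemidef) {f : ℝ → ℝ} (hf : ∀ x, 0 ≤ x → 0 ≤ f x) :
    (cfc f X).PosSemidef :=
  nonneg_iff_posSemidef.mp <| cfc_nonneg fun x hx =>
    hf x (spectrum_nonneg_of_nonneg (nonneg_iff_posSemidef.mpr hX) hx)

theorem Matrix.PosSemidef.of_diag_le {ι : Type*} [Fintype ι] [DecidableEq ι]
    {Y : Matrix ι ι ℝ} (hY : Y.PosSemidef) {d : ι → ℝ} (hd : ∀ i, Y i i ≤ d i) :
    (of fun i j => if i = j then d i else Y i j).PosSemidef := by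
  have : (of fun i j => if i = j then d i else Y i j) = Y + diagonal (fun i => d i - Y i i) := by
    ext i j
    by_cases h : i = j
    · subst h; simp
    · simp [h]
  rw [this]
  exact hY.add (posSemidef_diagonal_iff.mpr fun i => sub_nonneg.mpr (hd i))

/-- Let `X` be an `n × n` real symmetric positive semidefinite matrix with
unit diagonal, `ε > 0`, `p ∈ (0,1]`, and `0 < α ≤ ε^((2-p)/2) / (2p)`.  Let
`Y = X - 2αp • X * (X² + εI)^((p-2)/2)` and let `Y'` be obtained from `Y` by replacing every
diagonal entry with `1`.  Then `Y'` is positive semidefinite. -/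
theorem schatten_relaxation_step_unit_diagonal_psd
    (n : ℕ) (X : Matrix (Fin n) (Fin n) ℝ) (hX : X.PosSemidef)
    (hdiag : ∀ i, X i i = 1)
    (ε p α : ℝ) (hε : 0 < ε) (hp0 : 0 < p) (hp1 : p ≤ 1)
    (hα : 0 < α) (hαle : α ≤ ε ^ ((2 - p) / 2) / (2 * p))
    (Y : Matrix (Fin n) (Fin n) ℝ)
    (hY : Y = X - (2 * α * p) •
      (X * (isHermitian_sq_add_smul_one hX.1 ε).rpow ((p - 2) / 2)))
    (Y' : Matrix (Fin n) (Fin n) ℝ)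
    (hY' : Y' = Matrix.of fun i j => if i = j then (1 : ℝ) else Y i j) :
    Y'.PosSemidef := by
  have hr : (p - 2) / 2 ≤ 0 := by linarith
  set r := (p - 2) / 2
  set c := 2 * α * p
  have hc0 : 0 ≤ c := by positivity
  have hc : c ≤ ε ^ (-r) := by
    rw [show -r = (2 - p) / 2 by ring]
    linarith [(le_div_iff₀ (by positivity : 0 < 2 * p)).mp hαle]
  have hYpsd : Y.PosSemidef := by
    rw [hY, hX.1.sub_smul_mul_rpow_sq_add_smul_one]
    refine hX.posSemidef_cfc fun x hx => ?_
    nlinarith [Real.mul_rpow_sq_add_le_one hε hr hc x]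
  have hYdiag (i : Fin n) : Y i i ≤ 1 := by
    rw [hX.1.mul_rpow_sq_add_smul_one] at hY
    have hZ : 0 ≤ cfc (fun x => x * (x ^ 2 + ε) ^ r) X i i :=
      (hX.posSemidef_cfc fun x hx => by positivity).diag_nonneg
    rw [hY, Matrix.sub_apply, Matrix.smul_apply, smul_eq_mul, hdiag]
    nlinarith [mul_nonneg hc0 hZ]
  exact hY' ▸ hYpsd.of_diag_le hYdiag
end

section
/- Let X be an n×n real symmetric positive semidefinite matrix, let ε > 0, C > 0, and let α be a positive real number with α ≤ ε²/(2C). Then the matrix X − 2αC·(X² + εI)^{−2}·X is positive semidefinite. -/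
/-!
Under the continuous functional calculus the matrix is `f X` with
`f t = t - c (t² + ε)⁻² t = t (1 - c / (t² + ε)²)`, where `c = 2αC ≤ ε²`; and `f ≥ 0` on the
spectrum `⊆ [0, ∞)` of `X`, since `(t² + ε)² ≥ ε² ≥ c` there.
-/

section
variable {A : Type*} [Ring A] [StarRing A] [Algebra ℝ A] [TopologicalSpace A]
  [ContinuousFunctionalCalculus ℝ A IsSelfAdjoint]

lemma cfc_inv_sq_add_eq_ringInverse {a : A} (ha : IsSelfAdjoint a) {ε : ℝ} (hε : 0 < ε) :
    cfc (fun t : ℝ ↦ (t ^ 2 + ε)⁻¹) a = Ring.inverse (a ^ 2 + algebraMap ℝ A ε) := by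
  rw [cfc_inv _ _ fun t _ ↦ by positivity, cfc_add .., cfc_pow_id .., cfc_const ..]

lemma sub_smul_ringInverse_sq_add_algebraMap_sq_mul_nonneg [PartialOrder A] [StarOrderedRing A]
    [NonnegSpectrumClass ℝ A] {a : A} (ha : 0 ≤ a) {ε c : ℝ} (hε : 0 < ε) (hc : c ≤ ε ^ 2) :
    0 ≤ a - c • (Ring.inverse (a ^ 2 + algebraMap ℝ A ε) ^ 2 * a) := by
  set g : ℝ → ℝ := fun t ↦ (t ^ 2 + ε)⁻¹
  have hg : ContinuousOn g (spectrum ℝ a) :=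
    (Continuous.inv₀ (by fun_prop) fun t ↦ by positivity).continuousOn
  have h_cfc : a - c • (Ring.inverse (a ^ 2 + algebraMap ℝ A ε) ^ 2 * a)
      = cfc (fun t ↦ t - c * (g t ^ 2 * t)) a := by
    rw [cfc_sub .., cfc_const_mul c (fun t ↦ g t ^ 2 * t) a ((hg.pow 2).mul continuousOn_id),
      cfc_mul (fun t ↦ g t ^ 2) (fun t ↦ t) a (hg.pow 2), cfc_pow g 2 a hg,
      cfc_inv_sq_add_eq_ringInverse ha.isSelfAdjoint hε, cfc_id' ..]
  rw [h_cfc]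
  refine cfc_nonneg fun t ht ↦ ?_
  have ht : 0 ≤ t := spectrum_nonneg_of_nonneg ha ht
  have hcg : c * g t ^ 2 ≤ 1 := by
    rw [inv_pow, ← div_eq_mul_inv, div_le_one (by positivity)]
    nlinarith
  nlinarith

end

theorem gradient_step_psd_singular_value_relaxation_general
    (n : ℕ) (X : Matrix (Fin n) (Fin n) ℝ) (hX : X.PosSemidef)
    (ε C α : ℝ) (hε : 0 < ε) (hC : 0 < C) (hαle : α ≤ ε ^ 2 / (2 * C)) :
    (X - (2 * α * C) • (((X ^ 2 + ε • (1 : Matrix (Fin n) (Fin n) ℝ))⁻¹) ^ 2 * X)).PosSemidef := by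
  have hc : 2 * α * C ≤ ε ^ 2 := by
    rw [le_div_iff₀ (by positivity)] at hαle
    linarith
  rw [Matrix.nonsing_inv_eq_ringInverse, ← Algebra.algebraMap_eq_smul_one]
  open MatrixOrder in
  exact Matrix.nonneg_iff_posSemidef.mp
    (sub_smul_ringInverse_sq_add_algebraMap_sq_mul_nonneg hX.nonneg hε hc)

/-- Let `X` be an `n × n` real symmetric positive semidefinite matrix,
`ε > 0`, `C > 0`, and `0 < α ≤ ε² / (2C)`. Then `X - 2αC • (X² + εI)⁻² * X` is
positive semidefinite. -/
theorem gradient_step_psd_singular_value_relaxation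
    (n : ℕ) (X : Matrix (Fin n) (Fin n) ℝ) (hX : X.PosSemidef)
    (ε C α : ℝ) (hε : 0 < ε) (hC : 0 < C) (hα : 0 < α) (hαle : α ≤ ε ^ 2 / (2 * C)) :
    (X - (2 * α * C) • (((X ^ 2 + ε • (1 : Matrix (Fin n) (Fin n) ℝ))⁻¹) ^ 2 * X)).PosSemidef :=
  gradient_step_psd_singular_value_relaxation_general n X hX ε C α hε hC hαle
end

section
/- Let X be an n×n real symmetric positive semidefinite matrix, let ε > 0 and let p be a real number. Then every diagonal entry of the matrix X·(X² + εI)^{(p−2)/2} is nonnegative. -/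
/-!
Both factors are functions of `X` in the continuous functional calculus: the power equals
`cfc (fun x ↦ (x ^ 2 + ε) ^ r) X`, so the product is `cfc (fun x ↦ x * (x ^ 2 + ε) ^ r) X`.
That function is nonnegative on the spectrum of `X`, which lies in `[0, ∞)`, so the product is
positive semidefinite and its diagonal entries are nonnegative.
-/

open Matrix

open scoped MatrixOrder

namespace Matrix

lemma IsHermitian.rpow_eq_cfc_s5 {n : ℕ} {A : Matrix (Fin n) (Fin n) ℝ} (hA : A.IsHermitian)
    (r : ℝ) : hA.rpow r = cfc (fun x : ℝ => x ^ r) A := by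
  rw [hA.cfc_eq]
  rfl

lemma rpow_sq_add_smul_one_eq_cfc {n : ℕ} {X : Matrix (Fin n) (Fin n) ℝ} (hX : X.IsHermitian)
    (ε r : ℝ) :
    (isHermitian_sq_add_smul_one hX ε).rpow r = cfc (fun x : ℝ => (x ^ 2 + ε) ^ r) X := by
  have hX' : IsSelfAdjoint X := hX
  rw [IsHermitian.rpow_eq_cfc_s5, cfc_comp' (· ^ r) (fun x => x ^ 2 + ε) X
    ((X.finite_real_spectrum.image _).continuousOn _), cfc_add_const ε (· ^ 2) X,
    cfc_pow_id X 2, Algebra.algebraMap_eq_smul_one]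

lemma mul_cfc_eq_cfc_mul {ι : Type*} [Fintype ι] [DecidableEq ι] {X : Matrix ι ι ℝ}
    (hX : X.IsHermitian) (f : ℝ → ℝ) : X * cfc f X = cfc (fun x => x * f x) X := by
  have hX' : IsSelfAdjoint X := hX
  nth_rewrite 1 [← cfc_id' ℝ X]
  exact (cfc_mul _ _ X (X.finite_real_spectrum.continuousOn _)
    (X.finite_real_spectrum.continuousOn f)).symm

end Matrix

/-- Let `X` be an `n × n` real symmetric positive semidefinite matrix,
`ε > 0` and `p : ℝ`. Then every diagonal entry of `X * (X² + εI)^((p-2)/2)` is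
nonnegative. -/
theorem diag_nonneg_mul_rpow
    (n : ℕ) (X : Matrix (Fin n) (Fin n) ℝ) (hX : X.PosSemidef)
    (ε : ℝ) (hε : 0 < ε) (p : ℝ) :
    ∀ i, 0 ≤ (X * (isHermitian_sq_add_smul_one hX.1 ε).rpow ((p - 2) / 2)) i i := by
  intro i
  rw [rpow_sq_add_smul_one_eq_cfc hX.1, mul_cfc_eq_cfc_mul hX.1]
  refine (nonneg_iff_posSemidef.mp (cfc_nonneg fun x hx => ?_)).diag_nonneg
  have hx : 0 ≤ x := spectrum_nonneg_of_nonneg hX.nonneg hx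
  positivity
end

section
/- Let ε > 0 and q ∈ [0,1], and consider the function Φ(X) = (1+ε^q)·tr(Xᵀ(XXᵀ + εI)^{−1}X) on n×n real matrices. Then Φ is differentiable, and at every symmetric matrix X its gradient (the matrix G such that the Fréchet derivative of Φ at X in direction H is tr(GᵀH) for all H) equals 2ε(1+ε^q)·(XXᵀ + εI)^{−2}·X. -/
/-!
With `B = (XXᵀ + εI)⁻¹`, the product rule and `dB = -B (dX Xᵀ + X dXᵀ) B` give the directional
derivative `2 tr(Hᵀ (B - B X Xᵀ B) X)` of `tr(Xᵀ B X)`. Since `XXᵀB = I - εB`, the middle factor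
is `B - B(I - εB) = εB²`.
-/

open Matrix

section Algebra

variable {R : Type*} [CommRing R] {m : Type*} [Fintype m] [DecidableEq m]

theorem inv_sub_inv_mul_mul_transpose_mul_inv {ε : R} {X : Matrix m m R}
    (hX : IsUnit (X * Xᵀ + ε • 1)) :
    (X * Xᵀ + ε • 1)⁻¹ - (X * Xᵀ + ε • 1)⁻¹ * X * Xᵀ * (X * Xᵀ + ε • 1)⁻¹ =
      ε • (X * Xᵀ + ε • 1)⁻¹ ^ 2 := by
  set B := (X * Xᵀ + ε • 1)⁻¹
  have hXXB : X * Xᵀ * B = 1 - ε • B := by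
    rw [eq_sub_iff_add_eq, ← smul_one_mul, ← add_mul]
    exact mul_nonsing_inv _ ((isUnit_iff_isUnit_det _).mp hX)
  rw [mul_assoc, mul_assoc, ← mul_assoc X, hXXB, mul_sub, mul_one, mul_smul_comm, sub_sub_cancel,
    sq]

/-- The left side is the product-rule expansion of the derivative of `tr(Xᵀ(XXᵀ + ε)⁻¹X)` in
direction `H`. -/
theorem trace_transpose_mul_inv_mul_derivative_eq {ε : R} {X : Matrix m m R}
    (hX : IsUnit (X * Xᵀ + ε • 1)) (H : Matrix m m R) :
    trace (Xᵀ * (X * Xᵀ + ε • 1)⁻¹ * H + (Xᵀ * -((X * Xᵀ + ε • 1)⁻¹ * (X * Hᵀ + H * Xᵀ) *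
        (X * Xᵀ + ε • 1)⁻¹) + Hᵀ * (X * Xᵀ + ε • 1)⁻¹) * X) =
      trace (((2 * ε) • ((X * Xᵀ + ε • 1)⁻¹ ^ 2 * X))ᵀ * H) := by
  have hkey := inv_sub_inv_mul_mul_transpose_mul_inv hX
  set B := (X * Xᵀ + ε • 1)⁻¹
  have hBt : Bᵀ = B := by
    rw [transpose_nonsing_inv, transpose_add, transpose_mul, transpose_transpose, transpose_smul,
      transpose_one]
  have h1 : trace (Hᵀ * B * X) = trace (Xᵀ * B * H) := by
    rw [← trace_transpose]; simp only [transpose_mul, transpose_transpose, hBt, mul_assoc]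
  have h2 : trace (Xᵀ * B * X * Hᵀ * B * X) = trace (Xᵀ * B * H * (Xᵀ * B * X)) := by
    rw [← trace_transpose]; simp only [transpose_mul, transpose_transpose, hBt, mul_assoc]
  have h3 : trace (Xᵀ * B * H * (Xᵀ * B * X)) = trace (Xᵀ * (B * X * Xᵀ * B) * H) := by
    rw [trace_mul_comm]; simp only [mul_assoc]
  have hgrad : trace (((2 * ε) • (B ^ 2 * X))ᵀ * H) =
      2 * (trace (Xᵀ * B * H) - trace (Xᵀ * (B * X * Xᵀ * B) * H)) := by
    rw [← trace_sub, ← sub_mul, ← Matrix.mul_sub, hkey]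
    simp only [transpose_smul, transpose_mul, transpose_pow, hBt, Matrix.smul_mul,
      Matrix.mul_smul, trace_smul, smul_eq_mul, mul_assoc]
  rw [hgrad]
  simp only [Matrix.mul_add, Matrix.add_mul, Matrix.mul_neg, Matrix.neg_mul, trace_add, trace_neg]
  simp only [mul_assoc] at h1 h2 h3 ⊢
  linear_combination h1 - h2 - 2 * h3

end Algebra

theorem isUnit_mul_transpose_add_smul_one {m : Type*} [Fintype m] [DecidableEq m]
    (X : Matrix m m ℝ) {ε : ℝ} (hε : 0 < ε) : IsUnit (X * Xᵀ + ε • 1) := by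
  have hXX : (X * Xᵀ).PosSemidef := by
    rw [← conjTranspose_eq_transpose_of_trivial]
    exact posSemidef_self_mul_conjTranspose X
  exact (PosDef.posSemidef_add hXX (PosDef.one.smul hε)).isUnit

section Calculus

variable {𝕜 : Type*} [NontriviallyNormedField 𝕜] [CompleteSpace 𝕜]
  {m : Type*} [Fintype m] [DecidableEq m]

-- `fderiv` only sees the topology of matrices; the `L∞` operator norm just makes them a normed
-- algebra, where the derivative of `Ring.inverse` is available.
attribute [local instance] Matrix.linftyOpNormedRing Matrix.linftyOpNormedAlgebra

theorem hasFDerivAt_nonsing_inv {A : Matrix m m 𝕜} (hA : IsUnit A) :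
    HasFDerivAt (fun X : Matrix m m 𝕜 => X⁻¹)
      (-ContinuousLinearMap.mulLeftRight 𝕜 (Matrix m m 𝕜) A⁻¹ A⁻¹) A := by
  -- stated for the norm's uniformity, which is not reducibly the product one
  have : @CompleteSpace (Matrix m m 𝕜) PseudoMetricSpace.toUniformSpace :=
    FiniteDimensional.complete 𝕜 (Matrix m m 𝕜)
  obtain ⟨u, rfl⟩ := hA
  simp only [nonsing_inv_eq_ringInverse, Ring.inverse_unit]
  exact hasFDerivAt_ringInverse u

theorem differentiableAt_const_mul_trace_transpose_mul_inv_mul (c : 𝕜) {ε : 𝕜}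
    {X : Matrix m m 𝕜} (hX : IsUnit (X * Xᵀ + ε • 1)) :
    DifferentiableAt 𝕜 (fun Y : Matrix m m 𝕜 => c * trace (Yᵀ * (Y * Yᵀ + ε • 1)⁻¹ * Y)) X := by
  let T := (transposeLinearEquiv m m 𝕜 𝕜).toLinearMap.toContinuousLinearMap
  have hinv : DifferentiableAt 𝕜 (fun Y : Matrix m m 𝕜 => (Y * Yᵀ + ε • 1)⁻¹) X :=
    (hasFDerivAt_nonsing_inv hX).differentiableAt.comp X
      ((differentiableAt_id.fun_mul T.differentiableAt).add_const (ε • 1))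
  exact ((traceLinearMap m 𝕜 𝕜).toContinuousLinearMap.differentiableAt.comp X
    ((T.differentiableAt.fun_mul hinv).fun_mul differentiableAt_id)).const_mul c

theorem fderiv_const_mul_trace_transpose_mul_inv_mul_apply (c : 𝕜) {ε : 𝕜} {X : Matrix m m 𝕜}
    (hX : IsUnit (X * Xᵀ + ε • 1)) (H : Matrix m m 𝕜) :
    fderiv 𝕜 (fun Y : Matrix m m 𝕜 => c * trace (Yᵀ * (Y * Yᵀ + ε • 1)⁻¹ * Y)) X H =
      trace (((2 * ε * c) • ((X * Xᵀ + ε • 1)⁻¹ ^ 2 * X))ᵀ * H) := by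
  let T := (transposeLinearEquiv m m 𝕜 𝕜).toLinearMap.toContinuousLinearMap
  have hinv : HasFDerivAt (fun Y : Matrix m m 𝕜 => (Y * Yᵀ + ε • 1)⁻¹) _ X :=
    (hasFDerivAt_nonsing_inv hX).comp X
      (((hasFDerivAt_id X).fun_mul' T.hasFDerivAt).add_const (ε • 1))
  have hΦ : HasFDerivAt (fun Y : Matrix m m 𝕜 => c * trace (Yᵀ * (Y * Yᵀ + ε • 1)⁻¹ * Y)) _ X :=
    ((traceLinearMap m 𝕜 𝕜).toContinuousLinearMap.hasFDerivAt.comp X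
      ((T.hasFDerivAt.fun_mul' hinv).fun_mul' (hasFDerivAt_id X))).const_mul c
  calc fderiv 𝕜 _ X H
      = c * trace (Xᵀ * (X * Xᵀ + ε • 1)⁻¹ * H + (Xᵀ * -((X * Xᵀ + ε • 1)⁻¹ *
          (X * Hᵀ + H * Xᵀ) * (X * Xᵀ + ε • 1)⁻¹) + Hᵀ * (X * Xᵀ + ε • 1)⁻¹) * X) := by
        rw [hΦ.fderiv]; rfl
    _ = _ := by
        rw [trace_transpose_mul_inv_mul_derivative_eq hX, transpose_smul, transpose_smul,
          Matrix.smul_mul, Matrix.smul_mul, trace_smul, trace_smul, smul_eq_mul, smul_eq_mul]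
        ring

end Calculus

theorem gradient_singular_value_relaxation_general
    (n : ℕ) (ε q : ℝ) (hε : 0 < ε) :
    Differentiable ℝ (fun X : Matrix (Fin n) (Fin n) ℝ =>
        (1 + ε ^ q) * (Xᵀ * (X * Xᵀ + ε • (1 : Matrix (Fin n) (Fin n) ℝ))⁻¹ * X).trace) ∧
      ∀ X : Matrix (Fin n) (Fin n) ℝ, X.IsSymm →
        ∀ H : Matrix (Fin n) (Fin n) ℝ,
          fderiv ℝ (fun X : Matrix (Fin n) (Fin n) ℝ =>
              (1 + ε ^ q) * (Xᵀ * (X * Xᵀ + ε • (1 : Matrix (Fin n) (Fin n) ℝ))⁻¹ * X).trace)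
            X H =
          ((((2 * ε * (1 + ε ^ q)) •
              (((X * Xᵀ + ε • (1 : Matrix (Fin n) (Fin n) ℝ))⁻¹ ^ 2) * X))ᵀ) * H).trace := by
  have hunit (X : Matrix (Fin n) (Fin n) ℝ) := isUnit_mul_transpose_add_smul_one X hε
  exact ⟨fun X => differentiableAt_const_mul_trace_transpose_mul_inv_mul _ (hunit X),
    fun X _ H => fderiv_const_mul_trace_transpose_mul_inv_mul_apply _ (hunit X) H⟩

/-- Let `ε > 0`, `q ∈ [0,1]` and
`Φ(X) = (1+ε^q)·tr(Xᵀ(XXᵀ + εI)⁻¹X)` on `n × n` real matrices. Then `Φ` is differentiable,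
and at every symmetric `X` its gradient with respect to the Frobenius inner product
`tr(GᵀH)` equals `2ε(1+ε^q)·(XXᵀ + εI)⁻²·X`. -/
theorem gradient_singular_value_relaxation
    (n : ℕ) (ε q : ℝ) (hε : 0 < ε) (hq0 : 0 ≤ q) (hq1 : q ≤ 1) :
    Differentiable ℝ (fun X : Matrix (Fin n) (Fin n) ℝ =>
        (1 + ε ^ q) * (Xᵀ * (X * Xᵀ + ε • (1 : Matrix (Fin n) (Fin n) ℝ))⁻¹ * X).trace) ∧
      ∀ X : Matrix (Fin n) (Fin n) ℝ, X.IsSymm →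
        ∀ H : Matrix (Fin n) (Fin n) ℝ,
          fderiv ℝ (fun X : Matrix (Fin n) (Fin n) ℝ =>
              (1 + ε ^ q) * (Xᵀ * (X * Xᵀ + ε • (1 : Matrix (Fin n) (Fin n) ℝ))⁻¹ * X).trace)
            X H =
          ((((2 * ε * (1 + ε ^ q)) •
              (((X * Xᵀ + ε • (1 : Matrix (Fin n) (Fin n) ℝ))⁻¹ ^ 2) * X))ᵀ) * H).trace :=
  gradient_singular_value_relaxation_general n ε q hε
end
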